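/- Let G be an orientable ribbon graph expressible as a join G = P ∨ Q, and let A ⊆ E(G). Then G^A = P^{A ∩ E(P)} ∨ Q^{A ∩ E(Q)}, where the joins act naturally with respect to partial duality. -/

import Mathlib

/-- An orientable ribbon graph, encoded combinatorially as a finite set `F` of
flags together with three fixed-point-free involutions `t0`, `t1`, `t2` such
that `t0` and `t2` commute, `t0 ∘ t2` is fixed-point-free, and which is
orientable. -/
structure RibbonGraph : Type 1 where
  F : Type
  fintype : Fintype F
  t0 : F → F
  t1 : F → F
  t2 : F → F
  t0_invol : Function.Involutive t0
  t1_invol : Function.Involutive t1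
  t2_invol : Function.Involutive t2
  t0_ne : ∀ x, t0 x ≠ x
  t1_ne : ∀ x, t1 x ≠ x
  t2_ne : ∀ x, t2 x ≠ x
  comm : ∀ x, t0 (t2 x) = t2 (t0 x)
  t02_ne : ∀ x, t0 (t2 x) ≠ x
  orientable : ∃ s : F → Bool,
    (∀ x, s (t0 x) = !s x) ∧ (∀ x, s (t1 x) = !s x) ∧ (∀ x, s (t2 x) = !s x)

namespace RibbonGraph

/-- The edge containing a flag `x`: the orbit of `x` under `⟨t0, t2⟩`. -/
def edgeOf (G : RibbonGraph) (x : G.F) : Set G.F :=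
  {x, G.t0 x, G.t2 x, G.t0 (G.t2 x)}

/-- The set `E(G)` of edges of `G`. -/
def edgeSet (G : RibbonGraph) : Set (Set G.F) := {e | ∃ x, e = G.edgeOf x}

lemma edgeOf_t0 (G : RibbonGraph) (x : G.F) : G.edgeOf (G.t0 x) = G.edgeOf x := by
  have e1 : G.t0 (G.t0 x) = x := G.t0_invol x
  have e2 : G.t2 (G.t0 x) = G.t0 (G.t2 x) := (G.comm x).symm
  unfold edgeOf
  rw [e1, e2, G.t0_invol (G.t2 x)]
  ext y
  simp only [Set.mem_insert_iff, Set.mem_singleton_iff]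
  tauto

lemma edgeOf_t2 (G : RibbonGraph) (x : G.F) : G.edgeOf (G.t2 x) = G.edgeOf x := by
  have e1 : G.t2 (G.t2 x) = x := G.t2_invol x
  unfold edgeOf
  rw [e1]
  ext y
  simp only [Set.mem_insert_iff, Set.mem_singleton_iff]
  tauto

/-- Two flags lie on the same vertex: the equivalence generated by `t1, t2`. -/
def vertexRel (G : RibbonGraph) : G.F → G.F → Prop :=
  Relation.EqvGen fun x y => y = G.t1 x ∨ y = G.t2 x

/-- Two flags lie in the same connected component. -/
def compRel (G : RibbonGraph) : G.F → G.F → Prop :=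
  Relation.EqvGen fun x y => y = G.t0 x ∨ y = G.t1 x ∨ y = G.t2 x

/-- The number of vertices: the number of orbits of `⟨t1, t2⟩`. -/
noncomputable def numVertices (G : RibbonGraph) : ℕ :=
  Nat.card (Quot (fun x y : G.F => y = G.t1 x ∨ y = G.t2 x))

/-- The number of edges: the number of orbits of `⟨t0, t2⟩`. -/
noncomputable def numEdges (G : RibbonGraph) : ℕ :=
  Nat.card (Quot (fun x y : G.F => y = G.t0 x ∨ y = G.t2 x))

/-- The number of faces: the number of orbits of `⟨t0, t1⟩`. -/
noncomputable def numFaces (G : RibbonGraph) : ℕ :=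
  Nat.card (Quot (fun x y : G.F => y = G.t0 x ∨ y = G.t1 x))

/-- The number of connected components: the number of orbits of `⟨t0, t1, t2⟩`. -/
noncomputable def numComponents (G : RibbonGraph) : ℕ :=
  Nat.card (Quot (fun x y : G.F => y = G.t0 x ∨ y = G.t1 x ∨ y = G.t2 x))

/-- The Euler genus `ε(G) = 2c - v + e - f`. -/
noncomputable def eulerGenus (G : RibbonGraph) : ℤ :=
  2 * (G.numComponents : ℤ) - (G.numVertices : ℤ) + (G.numEdges : ℤ) - (G.numFaces : ℤ)

/-- A ribbon graph is plane if its Euler genus is zero. -/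
def IsPlane (G : RibbonGraph) : Prop := G.eulerGenus = 0

/-- The genus `g(G)`, defined by `ε(G) = 2 g(G)` (for orientable `G`). -/
noncomputable def genus (G : RibbonGraph) : ℤ := G.eulerGenus / 2

/-- `G` is connected if all flags lie in one component. -/
def Connected (G : RibbonGraph) : Prop := ∀ x y : G.F, G.compRel x y

/-- The vertex containing the flag `x`. -/
def vertexOf (G : RibbonGraph) (x : G.F) : Set G.F := {y | G.vertexRel x y}

/-- The set `V(G)` of vertices of `G`. -/
def vertices (G : RibbonGraph) : Set (Set G.F) := {v | ∃ x, v = G.vertexOf x}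

/-- The vertices incident to at least one edge of `B`. -/
def verticesIn (G : RibbonGraph) (B : Set (Set G.F)) : Set (Set G.F) :=
  {v | v ∈ G.vertices ∧ ∃ x ∈ v, G.edgeOf x ∈ B}

/-- An edge `e` is incident to a vertex `w`. -/
def Incid (G : RibbonGraph) (e w : Set G.F) : Prop := ∃ x ∈ e, x ∈ w

open Classical in
/-- The partial dual `G^A` of `G` with respect to a set `A` of edges: the roles
of `t0` and `t2` are swapped on all flags of edges in `A`. -/
noncomputable def pdual (G : RibbonGraph) (A : Set (Set G.F)) : RibbonGraph where
  F := G.F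
  fintype := G.fintype
  t0 := fun x => if G.edgeOf x ∈ A then G.t2 x else G.t0 x
  t1 := G.t1
  t2 := fun x => if G.edgeOf x ∈ A then G.t0 x else G.t2 x
  t0_invol := by
    intro x
    by_cases h : G.edgeOf x ∈ A
    · have h' : G.edgeOf (G.t2 x) ∈ A := by rwa [G.edgeOf_t2]
      simp only [if_pos h, if_pos h']
      exact G.t2_invol x
    · have h' : G.edgeOf (G.t0 x) ∉ A := by rwa [G.edgeOf_t0]
      simp only [if_neg h, if_neg h']
      exact G.t0_invol x
  t1_invol := G.t1_invol
  t2_invol := by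
    intro x
    by_cases h : G.edgeOf x ∈ A
    · have h' : G.edgeOf (G.t0 x) ∈ A := by rwa [G.edgeOf_t0]
      simp only [if_pos h, if_pos h']
      exact G.t0_invol x
    · have h' : G.edgeOf (G.t2 x) ∉ A := by rwa [G.edgeOf_t2]
      simp only [if_neg h, if_neg h']
      exact G.t2_invol x
  t0_ne := by
    intro x
    by_cases h : G.edgeOf x ∈ A
    · simp only [if_pos h]; exact G.t2_ne x
    · simp only [if_neg h]; exact G.t0_ne x
  t1_ne := G.t1_ne
  t2_ne := by
    intro x
    by_cases h : G.edgeOf x ∈ A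
    · simp only [if_pos h]; exact G.t0_ne x
    · simp only [if_neg h]; exact G.t2_ne x
  comm := by
    intro x
    by_cases h : G.edgeOf x ∈ A
    · have h0 : G.edgeOf (G.t0 x) ∈ A := by rwa [G.edgeOf_t0]
      have h2 : G.edgeOf (G.t2 x) ∈ A := by rwa [G.edgeOf_t2]
      simp only [if_pos h, if_pos h0, if_pos h2]
      exact (G.comm x).symm
    · have h0 : G.edgeOf (G.t0 x) ∉ A := by rwa [G.edgeOf_t0]
      have h2 : G.edgeOf (G.t2 x) ∉ A := by rwa [G.edgeOf_t2]
      simp only [if_neg h, if_neg h0, if_neg h2]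
      exact G.comm x
  t02_ne := by
    intro x
    by_cases h : G.edgeOf x ∈ A
    · have h0 : G.edgeOf (G.t0 x) ∈ A := by rwa [G.edgeOf_t0]
      simp only [if_pos h, if_pos h0]
      rw [← G.comm x]
      exact G.t02_ne x
    · have h2 : G.edgeOf (G.t2 x) ∉ A := by rwa [G.edgeOf_t2]
      simp only [if_neg h, if_neg h2]
      exact G.t02_ne x
  orientable := by
    obtain ⟨s, hs0, hs1, hs2⟩ := G.orientable
    refine ⟨s, ?_, hs1, ?_⟩
    · intro x
      by_cases h : G.edgeOf x ∈ A
      · simp only [if_pos h]; exact hs2 x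
      · simp only [if_neg h]; exact hs0 x
    · intro x
      by_cases h : G.edgeOf x ∈ A
      · simp only [if_pos h]; exact hs0 x
      · simp only [if_neg h]; exact hs2 x

/-- The geometric dual `G* = G^{E(G)}`. -/
noncomputable def gdual (G : RibbonGraph) : RibbonGraph := G.pdual G.edgeSet

/-- Equality (equivalence) of ribbon graphs: a bijection of flag sets commuting
with the three involutions. -/
def Equiv (G H : RibbonGraph) : Prop :=
  ∃ ψ : G.F ≃ H.F, (∀ x, ψ (G.t0 x) = H.t0 (ψ x)) ∧
    (∀ x, ψ (G.t1 x) = H.t1 (ψ x)) ∧ (∀ x, ψ (G.t2 x) = H.t2 (ψ x))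

/-- `H` is the ribbon subgraph of `G` induced by the edge set `A`, realized by
the flag embedding `φ`. The embedding identifies the flags of `H` with the
flags of edges in `A`, commutes with `t0` and `t2`, and `t1` of `H` is the
pairing of flags obtained from `t1` of `G` by skipping over flags of the
deleted edges (joining up the cyclic order around each vertex). -/
def IsInducedVia (G H : RibbonGraph) (A : Set (Set G.F)) (φ : H.F → G.F) : Prop :=
  A ⊆ G.edgeSet ∧ Function.Injective φ ∧
  Set.range φ = {x : G.F | G.edgeOf x ∈ A} ∧
  (∀ x, φ (H.t0 x) = G.t0 (φ x)) ∧ (∀ x, φ (H.t2 x) = G.t2 (φ x)) ∧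
  (∀ x, ∃ k : ℕ,
    φ (H.t1 x) = G.t1 ((G.t2 ∘ G.t1)^[k] (φ x)) ∧
    ∀ j < k, G.edgeOf (G.t1 ((G.t2 ∘ G.t1)^[j] (φ x))) ∉ A)

/-- `H` is the ribbon subgraph of `G` induced by the edge set `A` (that is,
`H = G|_A`, consisting of the edges in `A` and the vertices incident to them). -/
def IsInducedSubgraph (G H : RibbonGraph) (A : Set (Set G.F)) : Prop :=
  ∃ φ : H.F → G.F, IsInducedVia G H A φ

/-- The ribbon subgraph `G|_A` induced by the edge set `A` is plane. -/
def PlanePart (G : RibbonGraph) (A : Set (Set G.F)) : Prop :=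
  ∃ H : RibbonGraph, IsInducedSubgraph G H A ∧ H.IsPlane

/-- Connectivity of two flags within the ribbon subgraph induced by `B`. -/
def subRel (G : RibbonGraph) (B : Set (Set G.F)) : G.F → G.F → Prop :=
  Relation.EqvGen fun x y =>
    G.edgeOf x ∈ B ∧ G.edgeOf y ∈ B ∧ (y = G.t0 x ∨ G.vertexRel x y)

/-- The set of edges of the connected component of the ribbon subgraph induced
by `B` that contains the flag `x`. -/
def componentOf (G : RibbonGraph) (B : Set (Set G.F)) (x : G.F) : Set (Set G.F) :=
  {e | e ∈ B ∧ ∃ y ∈ e, G.subRel B x y}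

/-- `C` is (the edge set of) a connected component of the ribbon subgraph
induced by `B`. -/
def IsComponentOf (G : RibbonGraph) (C B : Set (Set G.F)) : Prop :=
  ∃ x : G.F, G.edgeOf x ∈ B ∧ C = G.componentOf B x

/-- The ribbon subgraph induced by `B ∪ C` is the 1-sum of the (non-trivial)
ribbon subgraphs induced by `B` and by `C`, occurring at the vertex `v`: the
edge sets are disjoint and `v` is the only common vertex. -/
def IsOneSumAt (G : RibbonGraph) (B C : Set (Set G.F)) (v : Set G.F) : Prop :=
  B ⊆ G.edgeSet ∧ C ⊆ G.edgeSet ∧ B.Nonempty ∧ C.Nonempty ∧ Disjoint B C ∧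
  v ∈ G.vertices ∧ G.verticesIn B ∩ G.verticesIn C = {v}

/-- The ribbon subgraph induced by `B ∪ C` is the join of the ribbon subgraphs
induced by `B` and by `C` at the vertex `v`: it is a 1-sum at `v` and the flags
of edges of `B` at `v` form an interval in the cyclic order around `v`
(equivalently, there are at most two `t1`-corners at `v` between an edge of `B`
and an edge of `C`). -/
def IsJoinAt (G : RibbonGraph) (B C : Set (Set G.F)) (v : Set G.F) : Prop :=
  G.IsOneSumAt B C v ∧
  Nat.card {x : G.F // x ∈ v ∧ G.edgeOf x ∈ B ∧ G.edgeOf (G.t1 x) ∈ C} ≤ 2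

/-- `G` is the join `P ∨ Q` of the ribbon graphs `P` and `Q`. -/
def IsJoinDecomp (G P Q : RibbonGraph) : Prop :=
  ∃ (Bp Bq : Set (Set G.F)) (v : Set G.F),
    IsInducedSubgraph G P Bp ∧ IsInducedSubgraph G Q Bq ∧
    G.IsJoinAt Bp Bq v ∧ Bp ∪ Bq = G.edgeSet

/-- `G` is prime: it cannot be expressed as a join of two ribbon graphs. -/
def Prime (G : RibbonGraph) : Prop :=
  ¬ ∃ (B C : Set (Set G.F)) (v : Set G.F), B ∪ C = G.edgeSet ∧ G.IsJoinAt B C v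

/-- The ribbon subgraph `G|_A` induced by the edge set `A` is prime. -/
def PrimePart (G : RibbonGraph) (A : Set (Set G.F)) : Prop :=
  ∃ H : RibbonGraph, IsInducedSubgraph G H A ∧ H.Prime

/-- `A` defines a plane-biseparation of the ribbon subgraph of `G` induced by
the edge set `W` (where `A ⊆ W`): either trivially (`A = W` or `A = ∅`, both
parts plane); or both parts `P_A = G|_A` and `Q_A = G|_{W ∖ A}` are plane and
the subgraph induced by `W` can be written as a sequence of 1-sums of the
connected components of `P_A` and `Q_A` such that every 1-sum occurs at a
distinct vertex and involves exactly one component of `P_A` and one of `Q_A`. -/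
def DefinesPlaneBisepOn (G : RibbonGraph) (W A : Set (Set G.F)) : Prop :=
  ((A = W ∨ A = ∅) ∧ G.PlanePart A ∧ G.PlanePart (W \ A)) ∨
  (G.PlanePart A ∧ G.PlanePart (W \ A) ∧
    ∃ (l : ℕ) (H : Fin l → Set (Set G.F)) (vtx : Fin l → Set G.F),
      1 ≤ l ∧ (⋃ i, H i) = W ∧
      (∀ i, G.IsComponentOf (H i) A ∨ G.IsComponentOf (H i) (W \ A)) ∧
      (∀ i : Fin l, 0 < i.val →
        G.IsOneSumAt (⋃ j : Fin l, ⋃ (_ : j < i), H j) (H i) (vtx i)) ∧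
      (∀ i j : Fin l, 0 < i.val → 0 < j.val → vtx i = vtx j → i = j) ∧
      (∀ i : Fin l, 0 < i.val → ∃! j : Fin l, j < i ∧ vtx i ∈ G.verticesIn (H j)) ∧
      (∀ i j : Fin l, 0 < i.val → j < i → vtx i ∈ G.verticesIn (H j) →
        (G.IsComponentOf (H i) A ↔ G.IsComponentOf (H j) (W \ A))))

/-- `A` defines a plane-biseparation of `G`: the restriction of `A` to each
connected component of `G` defines a plane-biseparation of that component. -/
def DefinesPlaneBisep (G : RibbonGraph) (A : Set (Set G.F)) : Prop :=
  ∀ C, G.IsComponentOf C G.edgeSet → G.DefinesPlaneBisepOn C (A ∩ C)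

/-- `G` is written as a (left-associated) sequence of joins
`G = H 0 ∨ H 1 ∨ ⋯ ∨ H (l-1)` of the ribbon subgraphs induced by the `H i`. -/
def IsSeqOfJoins (G : RibbonGraph) (l : ℕ) (H : Fin l → Set (Set G.F)) : Prop :=
  1 ≤ l ∧ (∀ i, H i ⊆ G.edgeSet) ∧ (⋃ i, H i) = G.edgeSet ∧
  ∀ i : Fin l, 0 < i.val →
    ∃ v : Set G.F, G.IsJoinAt (⋃ j : Fin l, ⋃ (_ : j < i), H j) (H i) v

/-- `A` defines a plane-join-biseparation of `G`: `G = H1 ∨ ⋯ ∨ Hl` with each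
`Hi` plane and `A` the union of the edge sets of some of the `Hi`. -/
def DefinesPlaneJoinBisep (G : RibbonGraph) (A : Set (Set G.F)) : Prop :=
  ∃ (l : ℕ) (H : Fin l → Set (Set G.F)) (I : Set (Fin l)),
    G.IsSeqOfJoins l H ∧ (∀ i, G.PlanePart (H i)) ∧ A = ⋃ i ∈ I, H i

/-- The dual of a join-summand move: `G = H1 ∨ H2` is replaced by
`G^{E(H2)} = H1 ∨ H2*`. -/
def DJSMove (G G' : RibbonGraph) : Prop :=
  ∃ (B C : Set (Set G.F)) (v : Set G.F),
    B ∪ C = G.edgeSet ∧ G.IsJoinAt B C v ∧ Equiv G' (G.pdual C)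

/-- `G ∼ H`: `H` is obtained from `G` by a finite sequence of dual of a
join-summand moves, or `H = G`, or `H = G*`. -/
def Sim (G H : RibbonGraph) : Prop :=
  Relation.ReflTransGen DJSMove G H ∨ Equiv G H ∨ Equiv H G.gdual

/-- Toggling a join-summand: for an expression `G = K1 ∨ ⋯ ∨ Kr` as a sequence
of joins, replace the edge set `C` by the symmetric difference `C Δ E(Ki)`. -/
def ToggleJoinSummand (G : RibbonGraph) (C C' : Set (Set G.F)) : Prop :=
  ∃ (l : ℕ) (H : Fin l → Set (Set G.F)) (i : Fin l),
    G.IsSeqOfJoins l H ∧ C' = symmDiff C (H i)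

/-- The disjoint union of two ribbon graphs. -/
def disjUnion (P Q : RibbonGraph) : RibbonGraph where
  F := P.F ⊕ Q.F
  fintype := by haveI := P.fintype; haveI := Q.fintype; infer_instance
  t0 := fun x => match x with
    | .inl a => .inl (P.t0 a)
    | .inr b => .inr (Q.t0 b)
  t1 := fun x => match x with
    | .inl a => .inl (P.t1 a)
    | .inr b => .inr (Q.t1 b)
  t2 := fun x => match x with
    | .inl a => .inl (P.t2 a)
    | .inr b => .inr (Q.t2 b)
  t0_invol := by
    rintro (a | b)
    · exact congrArg Sum.inl (P.t0_invol a)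
    · exact congrArg Sum.inr (Q.t0_invol b)
  t1_invol := by
    rintro (a | b)
    · exact congrArg Sum.inl (P.t1_invol a)
    · exact congrArg Sum.inr (Q.t1_invol b)
  t2_invol := by
    rintro (a | b)
    · exact congrArg Sum.inl (P.t2_invol a)
    · exact congrArg Sum.inr (Q.t2_invol b)
  t0_ne := by
    rintro (a | b) h
    · exact P.t0_ne a (Sum.inl_injective h)
    · exact Q.t0_ne b (Sum.inr_injective h)
  t1_ne := by
    rintro (a | b) h
    · exact P.t1_ne a (Sum.inl_injective h)
    · exact Q.t1_ne b (Sum.inr_injective h)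
  t2_ne := by
    rintro (a | b) h
    · exact P.t2_ne a (Sum.inl_injective h)
    · exact Q.t2_ne b (Sum.inr_injective h)
  comm := by
    rintro (a | b)
    · exact congrArg Sum.inl (P.comm a)
    · exact congrArg Sum.inr (Q.comm b)
  t02_ne := by
    rintro (a | b) h
    · exact P.t02_ne a (Sum.inl_injective h)
    · exact Q.t02_ne b (Sum.inr_injective h)
  orientable := by
    obtain ⟨sP, hP0, hP1, hP2⟩ := P.orientable
    obtain ⟨sQ, hQ0, hQ1, hQ2⟩ := Q.orientable
    refine ⟨Sum.elim sP sQ, ?_, ?_, ?_⟩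
    · rintro (a | b)
      · exact hP0 a
      · exact hQ0 b
    · rintro (a | b)
      · exact hP1 a
      · exact hQ1 b
    · rintro (a | b)
      · exact hP2 a
      · exact hQ2 b

/-- The underlying simple graph of a ribbon graph: vertices are the vertices of
`G`, and two distinct vertices are adjacent if some edge is incident to both. -/
def usg (G : RibbonGraph) : SimpleGraph ↥G.vertices where
  Adj a b := a ≠ b ∧ ∃ e ∈ G.edgeSet, G.Incid e ↑a ∧ G.Incid e ↑b
  symm := by
    constructor
    rintro a b ⟨hne, e, he, h1, h2⟩
    exact ⟨hne.symm, e, he, h2, h1⟩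
  loopless := by
    constructor
    rintro a ⟨hne, -⟩
    exact hne rfl

/-- Isomorphism of the underlying (multi)graphs of two ribbon graphs: a pair of
bijections on vertices and on edges preserving incidence. -/
def UnderlyingIso (G H : RibbonGraph) : Prop :=
  ∃ (fv : ↥G.vertices ≃ ↥H.vertices) (fe : ↥G.edgeSet ≃ ↥H.edgeSet),
    ∀ (e : ↥G.edgeSet) (w : ↥G.vertices),
      G.Incid ↑e ↑w ↔ H.Incid ↑(fe e) ↑(fv w)

/-- `Γ₀` is a minor of `Γ`: there are pairwise disjoint nonempty connected
branch sets realizing the adjacencies of `Γ₀`. -/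
def MinorOf {W V : Type*} (Γ₀ : SimpleGraph W) (Γ : SimpleGraph V) : Prop :=
  ∃ f : W → Set V,
    (∀ w, (f w).Nonempty) ∧
    (∀ w, (Γ.induce (f w)).Connected) ∧
    (Pairwise fun w w' => Disjoint (f w) (f w')) ∧
    ∀ w w', Γ₀.Adj w w' → ∃ a ∈ f w, ∃ b ∈ f w', Γ.Adj a b

/-- `G` is `k`-connected: its underlying graph is connected, has at least
`k + 1` vertices, and remains connected after deleting any set of fewer than
`k` vertices. -/
def KConnected (G : RibbonGraph) (k : ℕ) : Prop :=
  G.Connected ∧ k + 1 ≤ Nat.card ↥G.vertices ∧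
  ∀ S : Set (Set G.F), S ⊆ G.vertices → Nat.card ↥S < k →
    ∀ a ∈ G.vertices, a ∉ S → ∀ b ∈ G.vertices, b ∉ S →
      Relation.EqvGen (fun u w => u ∈ G.vertices ∧ w ∈ G.vertices ∧ u ∉ S ∧ w ∉ S ∧
        ∃ e ∈ G.edgeSet, G.Incid e u ∧ G.Incid e w) a b

/-!
Partial duality changes only `t0` and `t2`, so it keeps `t1` and the edges. Call a flag of an
edge in `B` an exit of `B` if its `t1`-neighbour lies on an edge outside `B`. By orientability,
rotating around a vertex from an exit of `B` returns to `B` at a different exit. For a join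
`G = P ∨ Q` with `E(P) = B` there are exactly two exits of `B`, so this rotation reaches the other
exit whichever `t2` is used, that of `G` or that of `G^A`. Hence the flags of `P` are joined up
around vertices in the same way in `G^A` as in `G`, which makes `P^{A ∩ E(P)}` the subgraph of
`G^A` induced by `B`; and the two exits still lie on one vertex of `G^A`, where the join occurs.
-/

attribute [local instance] RibbonGraph.fintype

section PartialDual

variable (G : RibbonGraph) (A : Set (Set G.F))

open Classical in
theorem pdual_t0_apply (x : G.F) :
    (G.pdual A).t0 x = if G.edgeOf x ∈ A then G.t2 x else G.t0 x := rfl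

theorem pdual_t1 : (G.pdual A).t1 = G.t1 := rfl

open Classical in
theorem pdual_t2_apply (x : G.F) :
    (G.pdual A).t2 x = if G.edgeOf x ∈ A then G.t0 x else G.t2 x := rfl

theorem edgeOf_pdual (x : G.F) : (G.pdual A).edgeOf x = G.edgeOf x := by
  show ({x, (G.pdual A).t0 x, (G.pdual A).t2 x, (G.pdual A).t0 ((G.pdual A).t2 x)} : Set G.F) =
    {x, G.t0 x, G.t2 x, G.t0 (G.t2 x)}
  by_cases h : G.edgeOf x ∈ A
  · have h0 : G.edgeOf (G.t0 x) ∈ A := by rwa [G.edgeOf_t0]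
    rw [pdual_t2_apply, pdual_t0_apply, pdual_t0_apply, if_pos h, if_pos h, if_pos h0, G.comm]
    exact congrArg (insert x) (Set.insert_comm _ _ _)
  · have h2 : G.edgeOf (G.t2 x) ∉ A := by rwa [G.edgeOf_t2]
    rw [pdual_t2_apply, pdual_t0_apply, pdual_t0_apply, if_neg h, if_neg h, if_neg h2]
    rfl

theorem edgeSet_pdual : (G.pdual A).edgeSet = G.edgeSet := by
  ext e
  exact exists_congr fun x => Eq.congr_right (edgeOf_pdual G A x)

end PartialDual

section Vertices

variable {G : RibbonGraph}

theorem vertexOf_eq_of_vertexRel {a b : G.F} (h : G.vertexRel a b) :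
    G.vertexOf a = G.vertexOf b :=
  Set.ext fun _ => ⟨(Relation.EqvGen.trans _ _ _ (Relation.EqvGen.symm _ _ h) ·),
    (Relation.EqvGen.trans _ _ _ h ·)⟩

theorem t1_mem_of_mem_vertices {v : Set G.F} (hv : v ∈ G.vertices) {x : G.F} (hx : x ∈ v) :
    G.t1 x ∈ v := by
  obtain ⟨z, rfl⟩ := hv
  exact Relation.EqvGen.trans _ _ _ hx (Relation.EqvGen.rel _ _ (Or.inl rfl))

end Vertices

def exits (G : RibbonGraph) (B : Set (Set G.F)) : Set G.F :=
  {x | G.edgeOf x ∈ B ∧ G.edgeOf (G.t1 x) ∉ B}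

/-- The flag reached from `y` by going around its vertex across `k + 1` corners. -/
def turn (G : RibbonGraph) (k : ℕ) (y : G.F) : G.F :=
  G.t1 ((G.t2 ∘ G.t1)^[k] y)

def IsFirstReturn (G : RibbonGraph) (B : Set (Set G.F)) (y : G.F) (k : ℕ) : Prop :=
  G.edgeOf (G.turn k y) ∈ B ∧ ∀ j < k, G.edgeOf (G.turn j y) ∉ B

section Exits

variable {G : RibbonGraph} {B C : Set (Set G.F)}

theorem exits_pdual (A : Set (Set G.F)) : (G.pdual A).exits B = G.exits B :=
  Set.ext fun x => and_congr (iff_of_eq (congrArg (· ∈ B) (edgeOf_pdual G A x)))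
    (not_congr (iff_of_eq (congrArg (· ∈ B) (edgeOf_pdual G A (G.t1 x)))))

theorem mem_exits_iff (hdisj : Disjoint B C) (hcover : B ∪ C = G.edgeSet) {x : G.F} :
    x ∈ G.exits B ↔ G.edgeOf x ∈ B ∧ G.edgeOf (G.t1 x) ∈ C := by
  have hmem : G.edgeOf (G.t1 x) ∈ B ∪ C := hcover ▸ ⟨G.t1 x, rfl⟩
  exact and_congr_right fun _ =>
    ⟨hmem.resolve_left, fun hC hB => Set.disjoint_left.1 hdisj hB hC⟩

theorem exists_mem_exits_of_vertexRel {a b : G.F} (hab : G.vertexRel a b)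
    (ha : G.edgeOf a ∈ B) (hb : G.edgeOf b ∉ B) : ∃ u, G.vertexRel a u ∧ u ∈ G.exits B := by
  by_contra! hno
  suffices key : ∀ x y, G.vertexRel x y → G.vertexRel a x → (G.edgeOf x ∈ B ↔ G.edgeOf y ∈ B) from
    hb ((key a b hab (.refl a)).1 ha)
  intro x y hxy
  induction hxy with
  | rel x y hxy =>
    intro hax
    rcases hxy with rfl | rfl
    · have hax' : G.vertexRel a (G.t1 x) := .trans _ _ _ hax (.rel _ _ (Or.inl rfl))
      refine ⟨fun hx => not_not.1 fun h => hno x hax ⟨hx, h⟩, fun hx => not_not.1 fun h => ?_⟩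
      exact hno _ hax' ⟨hx, by rwa [G.t1_invol]⟩
    · rw [G.edgeOf_t2]
  | refl => exact fun _ => Iff.rfl
  | symm x y hxy ih => exact fun hay => (ih (.trans _ _ _ hay (.symm _ _ hxy))).symm
  | trans x y z hxy _ ih₁ ih₂ => exact fun hax => (ih₁ hax).trans (ih₂ (.trans _ _ _ hax hxy))

theorem eq_of_mem_exits (hexits : (G.exits B).ncard ≤ 2) {x y z : G.F} (hx : x ∈ G.exits B)
    (hy : y ∈ G.exits B) (hz : z ∈ G.exits B) (hxy : x ≠ y) (hxz : x ≠ z) : y = z := by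
  by_contra hyz
  exact hexits.not_gt ((Set.two_lt_ncard_iff).2 ⟨x, y, z, hx, hy, hz, hxy, hxz, hyz⟩)

end Exits

section Turn

variable {G : RibbonGraph} {B : Set (Set G.F)} {y : G.F} {k : ℕ}

theorem t1_turn (k : ℕ) (y : G.F) : G.t1 (G.turn k y) = (G.t2 ∘ G.t1)^[k] y :=
  G.t1_invol _

theorem edgeOf_t1_turn_succ (k : ℕ) (y : G.F) :
    G.edgeOf (G.t1 (G.turn (k + 1) y)) = G.edgeOf (G.turn k y) := by
  rw [t1_turn, Function.iterate_succ_apply', Function.comp_apply, G.edgeOf_t2]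
  rfl

theorem vertexRel_turn (k : ℕ) (y : G.F) : G.vertexRel y (G.turn k y) := by
  have hrot : ∀ k, G.vertexRel y ((G.t2 ∘ G.t1)^[k] y) := by
    intro k
    induction k with
    | zero => exact .refl y
    | succ k ih =>
      rw [Function.iterate_succ_apply']
      exact .trans _ _ _ (.trans _ _ _ ih (.rel _ _ (Or.inl rfl))) (.rel _ _ (Or.inr rfl))
  exact .trans _ _ _ (hrot k) (.rel _ _ (Or.inl rfl))

theorem turn_ne (k : ℕ) (y : G.F) : G.turn k y ≠ y := by
  obtain ⟨s, -, hs1, hs2⟩ := G.orientable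
  -- an orientation is preserved by `t2 ∘ t1` and reversed by `t1`
  have hrot : Function.Semiconj s (G.t2 ∘ G.t1) id := fun x => by
    rw [Function.comp_apply, hs2, hs1, Bool.not_not, id]
  intro h
  have hs := congrArg s h
  rw [turn, hs1, (hrot.iterate_right k) y, Function.iterate_id, id] at hs
  exact Bool.not_ne_self _ hs

theorem exists_isFirstReturn (hy : G.edgeOf y ∈ B) : ∃ k, G.IsFirstReturn B y k := by
  have hret : ∃ k, G.edgeOf (G.turn k y) ∈ B := by
    obtain ⟨m, hm, hper⟩ := Function.mem_periodicPts.1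
      ((G.t2_invol.injective.comp G.t1_invol.injective).mem_periodicPts y)
    obtain ⟨k, rfl⟩ := Nat.exists_eq_succ_of_ne_zero hm.ne'
    refine ⟨k, ?_⟩
    rwa [← edgeOf_t1_turn_succ, t1_turn, hper.eq]
  classical
  exact ⟨Nat.find hret, Nat.find_spec hret, fun j hj => Nat.find_min hret hj⟩

theorem IsFirstReturn.eq_zero (hk : G.IsFirstReturn B y k) (hy : G.edgeOf (G.t1 y) ∈ B) :
    k = 0 :=
  Nat.eq_zero_of_not_pos fun hpos => hk.2 0 hpos hy

theorem IsFirstReturn.turn_mem_exits (hk : G.IsFirstReturn B y k) (hy : y ∈ G.exits B) :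
    G.turn k y ∈ G.exits B := by
  refine ⟨hk.1, ?_⟩
  cases k with
  | zero => exact absurd hk.1 hy.2
  | succ k => exact edgeOf_t1_turn_succ k y ▸ hk.2 k k.lt_succ_self

end Turn

section TwoExits

variable {G : RibbonGraph} {B : Set (Set G.F)}

theorem vertexRel_of_mem_exits (hexits : (G.exits B).ncard ≤ 2) {y z : G.F}
    (hy : y ∈ G.exits B) (hz : z ∈ G.exits B) : G.vertexRel y z := by
  rcases eq_or_ne y z with rfl | hyz
  · exact .refl y
  obtain ⟨k, hk⟩ := G.exists_isFirstReturn hy.1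
  have hturn : G.turn k y = z :=
    eq_of_mem_exits hexits hy (hk.turn_mem_exits hy) hz (G.turn_ne k y).symm hyz
  exact hturn ▸ G.vertexRel_turn k y

theorem IsFirstReturn.turn_eq_turn_pdual (hexits : (G.exits B).ncard ≤ 2) (A : Set (Set G.F))
    {y : G.F} (hy : G.edgeOf y ∈ B) {k₀ k : ℕ} (h₀ : G.IsFirstReturn B y k₀)
    (h : (G.pdual A).IsFirstReturn B y k) : G.turn k₀ y = (G.pdual A).turn k y := by
  by_cases hexit : y ∈ G.exits B
  · have hmem : (G.pdual A).turn k y ∈ G.exits B :=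
      exits_pdual A ▸ h.turn_mem_exits (by rwa [exits_pdual])
    exact eq_of_mem_exits hexits hexit (h₀.turn_mem_exits hexit) hmem (G.turn_ne k₀ y).symm
      ((G.pdual A).turn_ne k y).symm
  · have hy1 : G.edgeOf (G.t1 y) ∈ B := not_not.1 fun h1 => hexit ⟨hy, h1⟩
    rw [h₀.eq_zero hy1, h.eq_zero (by rwa [pdual_t1, edgeOf_pdual])]
    rfl

end TwoExits

section Join

variable {G : RibbonGraph} {B C : Set (Set G.F)} {v : Set G.F}

theorem IsOneSumAt.symm (h : G.IsOneSumAt B C v) : G.IsOneSumAt C B v :=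
  let ⟨hB, hC, hBne, hCne, hdisj, hv, hvint⟩ := h
  ⟨hC, hB, hCne, hBne, hdisj.symm, hv, Set.inter_comm _ _ ▸ hvint⟩

theorem IsJoinAt.symm (h : G.IsJoinAt B C v) : G.IsJoinAt C B v := by
  obtain ⟨hsum, hcard⟩ := h
  refine ⟨hsum.symm, le_trans (Nat.card_le_card_of_injective
    (fun x => ⟨G.t1 x.1, t1_mem_of_mem_vertices hsum.2.2.2.2.2.1 x.2.1, x.2.2.2,
      (G.t1_invol x.1).symm ▸ x.2.2.1⟩) fun x y hxy => ?_) hcard⟩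
  exact Subtype.ext (G.t1_invol.injective (congrArg Subtype.val hxy))

theorem IsOneSumAt.mem_of_edgeOf_mem (h : G.IsOneSumAt B C v) {x : G.F}
    (hB : G.edgeOf x ∈ B) (hC : G.edgeOf (G.t1 x) ∈ C) : x ∈ v := by
  have hx : G.vertexOf x ∈ G.verticesIn B ∩ G.verticesIn C :=
    ⟨⟨⟨x, rfl⟩, x, .refl x, hB⟩, ⟨x, rfl⟩, G.t1 x, .rel _ _ (Or.inl rfl), hC⟩
  rw [h.2.2.2.2.2.2, Set.mem_singleton_iff] at hx
  exact hx ▸ .refl x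

theorem IsOneSumAt.exists_mem_exits (h : G.IsOneSumAt B C v) : ∃ a, a ∈ G.exits B := by
  obtain ⟨-, -, -, -, hdisj, -, hvint⟩ := h
  obtain ⟨⟨⟨z, rfl⟩, p, hp, hpB⟩, -, q, hq, hqC⟩ : v ∈ G.verticesIn B ∩ G.verticesIn C :=
    hvint ▸ rfl
  obtain ⟨a, -, ha⟩ := exists_mem_exits_of_vertexRel (.trans _ _ _ (.symm _ _ hp) hq) hpB
    fun hqB => Set.disjoint_left.1 hdisj hqB hqC
  exact ⟨a, ha⟩

theorem IsJoinAt.ncard_exits_le_two (h : G.IsJoinAt B C v) (hcover : B ∪ C = G.edgeSet) :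
    (G.exits B).ncard ≤ 2 := by
  have hsub : G.exits B ⊆ {x | x ∈ v ∧ G.edgeOf x ∈ B ∧ G.edgeOf (G.t1 x) ∈ C} := fun x hx =>
    have hx' := (mem_exits_iff h.1.2.2.2.2.1 hcover).1 hx
    ⟨h.1.mem_of_edgeOf_mem hx'.1 hx'.2, hx'⟩
  exact (Set.ncard_le_ncard hsub).trans h.2

theorem card_corners_le_ncard_exits (hdisj : Disjoint B C) (w : Set G.F) :
    Nat.card {x // x ∈ w ∧ G.edgeOf x ∈ B ∧ G.edgeOf (G.t1 x) ∈ C} ≤ (G.exits B).ncard :=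
  Nat.card_le_card_of_injective
    (fun x => ⟨x.1, x.2.2.1, fun hB => Set.disjoint_left.1 hdisj hB x.2.2.2⟩)
    fun _ _ hxy => Subtype.ext (congrArg Subtype.val hxy :)

theorem isJoinAt_vertexOf (hdisj : Disjoint B C) (hcover : B ∪ C = G.edgeSet)
    (hexits : (G.exits B).ncard ≤ 2) {a : G.F} (ha : a ∈ G.exits B) :
    G.IsJoinAt B C (G.vertexOf a) := by
  have haC := ((mem_exits_iff hdisj hcover).1 ha).2
  have hva : G.vertexOf a ∈ G.verticesIn B ∩ G.verticesIn C :=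
    ⟨⟨⟨a, rfl⟩, a, .refl a, ha.1⟩, ⟨a, rfl⟩, G.t1 a, .rel _ _ (Or.inl rfl), haC⟩
  refine ⟨⟨hcover ▸ Set.subset_union_left, hcover ▸ Set.subset_union_right, ⟨_, ha.1⟩, ⟨_, haC⟩,
    hdisj, ⟨a, rfl⟩, Set.eq_singleton_iff_unique_mem.2 ⟨hva, ?_⟩⟩,
    (card_corners_le_ncard_exits hdisj _).trans hexits⟩
  rintro _ ⟨⟨⟨z, rfl⟩, p, hp, hpB⟩, -, q, hq, hqC⟩
  obtain ⟨u, hpu, hu⟩ := exists_mem_exits_of_vertexRel (.trans _ _ _ (.symm _ _ hp) hq) hpB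
    fun hqB => Set.disjoint_left.1 hdisj hqB hqC
  exact vertexOf_eq_of_vertexRel
    (.trans _ _ _ hp (.trans _ _ _ hpu (vertexRel_of_mem_exits hexits hu ha)))

end Join

section Induced

variable {G P : RibbonGraph} {B : Set (Set G.F)} {φ : P.F → G.F}

theorem IsInducedVia.image_edgeOf (hP : G.IsInducedVia P B φ) (x : P.F) :
    φ '' P.edgeOf x = G.edgeOf (φ x) := by
  obtain ⟨-, -, -, hφ0, hφ2, -⟩ := hP
  simp only [edgeOf, Set.image_insert_eq, Set.image_singleton, hφ0, hφ2]

theorem IsInducedVia.edgeOf_mem (hP : G.IsInducedVia P B φ) (x : P.F) : G.edgeOf (φ x) ∈ B :=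
  hP.2.2.1.subst (motive := (φ x ∈ ·)) ⟨x, rfl⟩

theorem IsInducedVia.pdual (hP : G.IsInducedVia P B φ) (hexits : (G.exits B).ncard ≤ 2)
    (A : Set (Set G.F)) :
    (G.pdual A).IsInducedVia (P.pdual {e | e ∈ P.edgeSet ∧ φ '' e ∈ A}) B φ := by
  classical
  have hmem (x : P.F) :
      P.edgeOf x ∈ {e | e ∈ P.edgeSet ∧ φ '' e ∈ A} ↔ G.edgeOf (φ x) ∈ A := by
    simp only [Set.mem_ofPred_eq, hP.image_edgeOf, and_iff_right_iff_imp]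
    exact fun _ => ⟨x, rfl⟩
  have hφB := hP.edgeOf_mem
  obtain ⟨hB, hinj, hrange, hφ0, hφ2, hφ1⟩ := hP
  refine ⟨edgeSet_pdual G A ▸ hB, hinj, ?_, fun (x : P.F) => ?_, fun (x : P.F) => ?_,
    fun (x : P.F) => ?_⟩
  · exact hrange.trans (Set.ext fun y => iff_of_eq (congrArg (· ∈ B) (edgeOf_pdual G A y).symm))
  · simp only [pdual_t0_apply, hmem, apply_ite φ, hφ0, hφ2]
    congr
  · simp only [pdual_t2_apply, hmem, apply_ite φ, hφ0, hφ2]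
    congr
  · obtain ⟨k₀, hk₀, hk₀min⟩ := hφ1 x
    have h₀ : G.IsFirstReturn B (φ x) k₀ :=
      ⟨(show φ (P.t1 x) = G.turn k₀ (φ x) from hk₀) ▸ hφB (P.t1 x), hk₀min⟩
    obtain ⟨k, hk⟩ := (G.pdual A).exists_isFirstReturn (B := B)
      (y := φ x) ((edgeOf_pdual G A (φ x)).symm ▸ hφB x)
    exact ⟨k, hk₀.trans (h₀.turn_eq_turn_pdual hexits A (hφB x) hk), hk.2⟩

end Induced

end RibbonGraph

theorem pdual_of_join_general (G P Q : RibbonGraph) (Bp Bq : Set (Set G.F))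
    (v : Set G.F) (φp : P.F → G.F) (φq : Q.F → G.F)
    (hP : RibbonGraph.IsInducedVia G P Bp φp)
    (hQ : RibbonGraph.IsInducedVia G Q Bq φq)
    (hJ : G.IsJoinAt Bp Bq v)
    (hcover : Bp ∪ Bq = G.edgeSet)
    (A : Set (Set G.F)) :
    RibbonGraph.IsJoinDecomp (G.pdual A)
      (P.pdual {e | e ∈ P.edgeSet ∧ φp '' e ∈ A})
      (Q.pdual {e | e ∈ Q.edgeSet ∧ φq '' e ∈ A}) := by
  have hexitsP : (G.exits Bp).ncard ≤ 2 := hJ.ncard_exits_le_two hcover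
  have hexitsQ : (G.exits Bq).ncard ≤ 2 :=
    hJ.symm.ncard_exits_le_two (Set.union_comm Bp Bq ▸ hcover)
  obtain ⟨a, ha⟩ := hJ.1.exists_mem_exits
  have hcoverA : Bp ∪ Bq = (G.pdual A).edgeSet := RibbonGraph.edgeSet_pdual G A ▸ hcover
  obtain ⟨⟨-, -, -, -, hdisj, -⟩, -⟩ := hJ
  refine ⟨Bp, Bq, (G.pdual A).vertexOf a, ⟨φp, hP.pdual hexitsP A⟩, ⟨φq, hQ.pdual hexitsQ A⟩,
    RibbonGraph.isJoinAt_vertexOf (G := G.pdual A) hdisj hcoverA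
      (RibbonGraph.exits_pdual A ▸ hexitsP) (RibbonGraph.exits_pdual A ▸ ha), hcoverA⟩

/-- Partial duality preserves joins: if `G = P ∨ Q` and `A ⊆ E(G)`, then
`G^A = P^{A ∩ E(P)} ∨ Q^{A ∩ E(Q)}`. -/
theorem pdual_of_join (G P Q : RibbonGraph) (Bp Bq : Set (Set G.F))
    (v : Set G.F) (φp : P.F → G.F) (φq : Q.F → G.F)
    (hP : RibbonGraph.IsInducedVia G P Bp φp)
    (hQ : RibbonGraph.IsInducedVia G Q Bq φq)
    (hJ : G.IsJoinAt Bp Bq v)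
    (hcover : Bp ∪ Bq = G.edgeSet)
    (A : Set (Set G.F)) (hA : A ⊆ G.edgeSet) :
    RibbonGraph.IsJoinDecomp (G.pdual A)
      (P.pdual {e | e ∈ P.edgeSet ∧ φp '' e ∈ A})
      (Q.pdual {e | e ∈ Q.edgeSet ∧ φq '' e ∈ A}) :=
  pdual_of_join_general G P Q Bp Bq v φp φq hP hQ hJ hcover A
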